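/- arXiv:1112.3066 — 3 statements merged into one kernel-verified Lean document; each statement's English description precedes it below -/
import Mathlib

section
/- Let n ≥ 2 and k ≥ 1, and let G be the weighted coloured-edge graph with vertices v₁, …, v_n and k colours in which, for each pair i < j and each colour c, there is exactly one edge from v_i to v_j of colour c with weight 2^(j−1) − 2^(i−1), and there are no other edges. Then every path from v₁ to v_n has total weight (summed over all colours) equal to 2^(n−1) − 1, every path from v₁ to v_n is minimal, and the number of paths from v₁ to v_n is exactly k·(k+1)^(n−2); in particular the bound k·(k+1)^(n−2) on the total number of minimal paths is attained. -/
open Classical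

/-- A weighted coloured-edge graph: a directed multigraph with vertex set `V`,
edge type `E` (each edge `e` has an initial vertex `src e` and a terminal vertex
`dst e`, and self-loops are excluded), a strictly positive real weight on each edge,
and a surjective colour function onto the colour set `M`. -/
structure WCEGraph (V : Type) (M : Type) where
  E : Type
  src : E → V
  dst : E → V
  wt : E → ℝ
  col : E → M
  wt_pos : ∀ e, 0 < wt e
  no_loop : ∀ e, src e ≠ dst e
  col_surj : Function.Surjective col

namespace WCEGraph

variable {V M : Type} (G : WCEGraph V M)

/-- `p` is a path from `u` to `v`: a nonempty finite sequence of edges, each edge's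
terminal vertex being the next edge's initial vertex, starting at `u` and ending at `v`. -/
def IsPath (u v : V) (p : List G.E) : Prop :=
  p ≠ [] ∧ (∀ e ∈ p.head?, G.src e = u) ∧ (∀ e ∈ p.getLast?, G.dst e = v) ∧
    p.Chain' (fun a b => G.dst a = G.src b)

/-- The weight `ω_c(p)` of the path `p` in colour `c`: the sum of the weights of
those edges of `p` having colour `c`. -/
noncomputable def colWeight (c : M) (p : List G.E) : ℝ :=
  (p.map (fun e => if G.col e = c then G.wt e else 0)).sum

/-- The preorder on paths: `p ≤ q` iff the weight of `p` in each colour is at most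
that of `q`. -/
def pathLE (p q : List G.E) : Prop :=
  ∀ c : M, G.colWeight c p ≤ G.colWeight c q

/-- `p` is a minimal path from `u` to `v`: every path `q` from `u` to `v` with
`q ≤ p` has the same weight as `p` in every colour. -/
def IsMinimal (u v : V) (p : List G.E) : Prop :=
  G.IsPath u v p ∧
    ∀ q, G.IsPath u v q → G.pathLE q p → ∀ c : M, G.colWeight c q = G.colWeight c p

end WCEGraph

/-- The graph with vertices `v₁, …, v_n` (represented by `Fin n`, so `v_i` is `i - 1`)
and `k` colours, in which for each pair `i < j` and each colour `c` there is exactly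
one edge from `v_i` to `v_j` of colour `c`, with weight `2 ^ (j - 1) - 2 ^ (i - 1)`. -/
noncomputable def fullChainGraph (n k : ℕ) (hn : 2 ≤ n) : WCEGraph (Fin n) (Fin k) where
  E := {q : Fin n × Fin n // q.1 < q.2} × Fin k
  src e := e.1.1.1
  dst e := e.1.1.2
  wt e := 2 ^ (e.1.1.2 : ℕ) - 2 ^ (e.1.1.1 : ℕ)
  col e := e.2
  wt_pos e := by
    have h : (e.1.1.1 : ℕ) < (e.1.1.2 : ℕ) := e.1.2
    have : (2 : ℝ) ^ (e.1.1.1 : ℕ) < 2 ^ (e.1.1.2 : ℕ) := by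
      exact pow_lt_pow_right₀ one_lt_two h
    try dsimp only
    linarith
  no_loop e := e.1.2.ne
  col_surj c := ⟨(⟨(⟨0, by omega⟩, ⟨1, by omega⟩), by simp⟩, c), rfl⟩

/-!
The weight of an edge `vᵢ → vⱼ` is the difference of the potential `vᵢ ↦ 2 ^ (i - 1)` at its
ends, so the total weight of a path from `v₁` to `v_n` telescopes to `2 ^ (n - 1) - 1`. All
these paths therefore have the same total weight, and a path lying below another one colourwise
with the same total must agree with it in every colour: every path is minimal.

For the count, record a path by the colour of the edge entering each vertex (`none` for a vertex
not entered). Vertices increase along a path, so the entered vertices are visited in increasing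
order and the path can be read back from the record. The records that occur are exactly the
maps with nothing entering `v₁` and something entering `v_n`; there are `k * (k + 1) ^ (n - 2)`
of them.
-/

namespace WCEGraph

variable {V M : Type} (G : WCEGraph V M)

@[simp]
theorem not_isPath_nil (u v : V) : ¬ G.IsPath u v [] := fun h => h.1 rfl

theorem isPath_cons {u v : V} {e : G.E} {p : List G.E} :
    G.IsPath u v (e :: p) ↔
      G.src e = u ∧ (p = [] ∧ G.dst e = v ∨ G.IsPath (G.dst e) v p) := by
  cases p with
  | nil => simp [IsPath, List.Chain']
  | cons f p =>
    simp only [IsPath, List.Chain', List.head?_cons, Option.mem_def, Option.some.injEq,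
      forall_eq', List.getLast?_cons_cons, List.isChain_cons_cons, ne_eq, reduceCtorEq,
      not_false_eq_true, true_and, false_and, false_or]
    tauto

theorem sum_colWeight [Fintype M] (p : List G.E) :
    ∑ c, G.colWeight c p = (p.map G.wt).sum := by
  induction p with
  | nil => simp [colWeight]
  | cons e p ih =>
    simp only [colWeight, List.map_cons, List.sum_cons, Finset.sum_add_distrib] at ih ⊢
    rw [ih, Finset.sum_ite_eq]
    simp

variable {G}

theorem IsPath.sum_wt_eq_sub {φ : V → ℝ} (hφ : ∀ e, G.wt e = φ (G.dst e) - φ (G.src e))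
    {u v : V} {p : List G.E} (hp : G.IsPath u v p) : (p.map G.wt).sum = φ v - φ u := by
  induction p generalizing u with
  | nil => exact absurd hp (G.not_isPath_nil u v)
  | cons e p ih =>
    obtain ⟨rfl, ⟨rfl, rfl⟩ | hp⟩ := G.isPath_cons.mp hp
    · simp [hφ]
    · rw [List.map_cons, List.sum_cons, ih hp, hφ]
      ring

theorem IsPath.isMinimal_of_forall_sum_colWeight_eq [Fintype M] {u v : V} {C : ℝ}
    (hC : ∀ q, G.IsPath u v q → ∑ c, G.colWeight c q = C) {p : List G.E}
    (hp : G.IsPath u v p) : G.IsMinimal u v p := by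
  refine ⟨hp, fun q hq hqp c => ?_⟩
  have hsum : ∑ c, (G.colWeight c p - G.colWeight c q) = 0 := by
    rw [Finset.sum_sub_distrib, hC p hp, hC q hq, sub_self]
  have := (Finset.sum_eq_zero_iff_of_nonneg fun c _ => sub_nonneg.mpr (hqp c)).mp hsum c
    (Finset.mem_univ c)
  linarith

theorem IsPath.eq_of_map_eq
    (hext : ∀ e f, G.src e = G.src f → G.dst e = G.dst f → G.col e = G.col f → e = f)
    {u v : V} {p q : List G.E} (hp : G.IsPath u v p) (hq : G.IsPath u v q)
    (hpq : p.map (fun e => (G.dst e, G.col e)) = q.map (fun e => (G.dst e, G.col e))) :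
    p = q := by
  induction p generalizing u q with
  | nil => exact absurd hp (G.not_isPath_nil u v)
  | cons e p ih =>
    cases q with
    | nil => exact absurd hq (G.not_isPath_nil u v)
    | cons f q =>
      simp only [List.map_cons, List.cons.injEq, Prod.mk.injEq] at hpq
      obtain ⟨⟨hdst, hcol⟩, hpq⟩ := hpq
      obtain ⟨hse, hp⟩ := G.isPath_cons.mp hp
      obtain ⟨hsf, hq⟩ := G.isPath_cons.mp hq
      obtain rfl := hext e f (hse.trans hsf.symm) hdst hcol
      rcases hp with ⟨rfl, -⟩ | hp
      · simpa using hpq.symm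
      rcases hq with ⟨rfl, -⟩ | hq
      · simpa using hpq
      rw [ih hp hq hpq]

theorem IsPath.mem_map_dst {u v : V} {p : List G.E} (hp : G.IsPath u v p) :
    v ∈ p.map G.dst := by
  obtain ⟨hne, -, hlast, -⟩ := hp
  exact List.mem_map.mpr ⟨_, List.getLast_mem hne, hlast _ (List.getLast?_eq_some_getLast hne)⟩

theorem IsPath.pairwise_lt_dst [LinearOrder V] (hfwd : ∀ e, G.src e < G.dst e) {u v : V}
    {p : List G.E} (hp : G.IsPath u v p) : (u :: p.map G.dst).Pairwise (· < ·) := by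
  induction p generalizing u with
  | nil => exact absurd hp (G.not_isPath_nil u v)
  | cons e p ih =>
    obtain ⟨rfl, ⟨rfl, rfl⟩ | hp⟩ := G.isPath_cons.mp hp
    · simpa using hfwd e
    · have ih := ih hp
      rw [List.map_cons, List.pairwise_cons]
      refine ⟨?_, ih⟩
      rintro w (_ | ⟨_, hw⟩)
      · exact hfwd e
      · exact (hfwd e).trans (List.rel_of_pairwise_cons ih hw)

section EntryColour

variable (G) [DecidableEq V]

def entryColour (p : List G.E) (v : V) : Option M :=
  (p.find? (G.dst · = v)).map G.col

theorem entryColour_eq_none_iff {p : List G.E} {v : V} :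
    G.entryColour p v = none ↔ v ∉ p.map G.dst := by
  simp [entryColour]

theorem entryColour_cons (e : G.E) (p : List G.E) :
    G.entryColour (e :: p) = Function.update (G.entryColour p) (G.dst e) (some (G.col e)) := by
  funext v
  by_cases h : G.dst e = v
  · subst h; simp [entryColour]
  · simp [entryColour, h, Function.update_of_ne (Ne.symm h)]

theorem entryColour_dst {p : List G.E} (hp : (p.map G.dst).Nodup) {e : G.E} (he : e ∈ p) :
    G.entryColour p (G.dst e) = some (G.col e) := by
  induction p with
  | nil => simp at he
  | cons f p ih =>
    rw [List.map_cons, List.nodup_cons] at hp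
    rw [entryColour_cons]
    rcases List.mem_cons.mp he with rfl | he
    · simp
    · have hef : G.dst e ≠ G.dst f := by
        rintro h
        exact hp.1 (h ▸ List.mem_map_of_mem he)
      rw [Function.update_of_ne hef, ih hp.2 he]

theorem map_dst_some_col_eq {p : List G.E} (hp : (p.map G.dst).Nodup) :
    p.map (fun e => (G.dst e, some (G.col e))) =
      (p.map G.dst).map (fun v => (v, G.entryColour p v)) := by
  rw [List.map_map]
  exact List.map_congr_left fun e he => by simp [G.entryColour_dst hp he]

variable {G}

theorem IsPath.entryColour_ne_none {u v : V} {p : List G.E} (hp : G.IsPath u v p) :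
    G.entryColour p v ≠ none :=
  fun h => G.entryColour_eq_none_iff.mp h hp.mem_map_dst

variable [LinearOrder V]

theorem IsPath.entryColour_start (hfwd : ∀ e, G.src e < G.dst e) {u v : V} {p : List G.E}
    (hp : G.IsPath u v p) : G.entryColour p u = none :=
  G.entryColour_eq_none_iff.mpr fun hu =>
    lt_irrefl u (List.rel_of_pairwise_cons (hp.pairwise_lt_dst hfwd) hu)

theorem injOn_entryColour (hfwd : ∀ e, G.src e < G.dst e)
    (hext : ∀ e f, G.src e = G.src f → G.dst e = G.dst f → G.col e = G.col f → e = f)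
    (u v : V) : Set.InjOn G.entryColour {p | G.IsPath u v p} := by
  intro p hp q hq hpq
  have hsp := (hp.pairwise_lt_dst hfwd).of_cons
  have hsq := (hq.pairwise_lt_dst hfwd).of_cons
  have hdst : p.map G.dst = q.map G.dst := hsp.eq_of_mem_iff hsq fun w => by
    rw [← not_iff_not, ← entryColour_eq_none_iff, ← entryColour_eq_none_iff, hpq]
  have hsome : p.map (fun e => (G.dst e, some (G.col e))) =
      q.map (fun e => (G.dst e, some (G.col e))) := by
    rw [G.map_dst_some_col_eq hsp.nodup, G.map_dst_some_col_eq hsq.nodup, hdst, hpq]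
  refine hp.eq_of_map_eq hext hq ?_
  have hinj : Function.Injective (Prod.map id some : V × M → V × Option M) :=
    Function.injective_id.prodMap (Option.some_injective M)
  exact hinj.list_map (by simpa [List.map_map, Function.comp_def] using hsome)

end EntryColour

end WCEGraph

theorem ncard_setOf_eq_none_and_ne_none {ι β : Type*} [Fintype ι] [Fintype β]
    {a b : ι} (hab : a ≠ b) :
    {g : ι → Option β | g a = none ∧ g b ≠ none}.ncard =
      Fintype.card β * (Fintype.card β + 1) ^ (Fintype.card ι - 2) := by
  let t : ι → Finset (Option β) := fun i =>
    if i = a then {none} else if i = b then Finset.univ.erase none else Finset.univ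
  have hset : {g : ι → Option β | g a = none ∧ g b ≠ none} = Fintype.piFinset t := by
    ext g
    simp only [Set.mem_ofPred_eq, Finset.mem_coe, Fintype.mem_piFinset, t]
    refine ⟨fun ⟨ha, hb⟩ i => ?_,
      fun h => ⟨by simpa using h a, by simpa [hab.symm] using h b⟩⟩
    split_ifs with hia hib
    · simp [hia, ha]
    · simp [hib, hb]
    · simp
  have hb : b ∈ Finset.univ.erase a := Finset.mem_erase.mpr ⟨hab.symm, Finset.mem_univ b⟩
  have hrest : ∀ i ∈ (Finset.univ.erase a).erase b, (t i).card = Fintype.card β + 1 := by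
    intro i hi
    obtain ⟨hib, hia⟩ : i ≠ b ∧ i ≠ a := by simpa using hi
    simp [t, hia, hib]
  rw [hset, Set.ncard_coe_finset, Fintype.card_piFinset,
    ← Finset.mul_prod_erase _ _ (Finset.mem_univ a), ← Finset.mul_prod_erase _ _ hb,
    Finset.prod_congr rfl hrest, Finset.prod_const, Finset.card_erase_of_mem hb,
    Finset.card_erase_of_mem (Finset.mem_univ a), Finset.card_univ]
  simp [t, hab.symm, Finset.card_erase_of_mem, Nat.sub_sub]

namespace fullChainGraph

variable {n k : ℕ} {hn : 2 ≤ n}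

theorem src_lt_dst (e : (fullChainGraph n k hn).E) :
    (fullChainGraph n k hn).src e < (fullChainGraph n k hn).dst e :=
  e.1.2

theorem edge_ext {e f : (fullChainGraph n k hn).E}
    (hsrc : (fullChainGraph n k hn).src e = (fullChainGraph n k hn).src f)
    (hdst : (fullChainGraph n k hn).dst e = (fullChainGraph n k hn).dst f)
    (hcol : (fullChainGraph n k hn).col e = (fullChainGraph n k hn).col f) : e = f :=
  Prod.ext (Subtype.ext (Prod.ext hsrc hdst)) hcol

theorem exists_isPath_entryColour_eq (g : Fin n → Option (Fin k)) {w : Fin n}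
    (hw : g w ≠ none) (hgt : ∀ v, w < v → g v = none) (a : Fin n) (ha : a < w) :
    ∃ p, (fullChainGraph n k hn).IsPath a w p ∧
      (fullChainGraph n k hn).entryColour p = fun v => if a < v then g v else none := by
  induction a using WellFoundedGT.induction with
  | _ a ih =>
  let s := Finset.univ.filter fun v => a < v ∧ g v ≠ none
  have hs : s.Nonempty := ⟨w, by simp [s, ha, hw]⟩
  set b := s.min' hs
  have hb : a < b ∧ g b ≠ none := (Finset.mem_filter.mp (s.min'_mem hs)).2
  have hbmin : ∀ v, a < v → g v ≠ none → b ≤ v := fun v h1 h2 =>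
    s.min'_le v (by simp [s, h1, h2])
  let e : (fullChainGraph n k hn).E :=
    (⟨(a, b), hb.1⟩, (g b).get (Option.isSome_iff_ne_none.mpr hb.2))
  obtain ⟨p, hp, hpg⟩ : ∃ p, (p = [] ∧ b = w ∨ (fullChainGraph n k hn).IsPath b w p) ∧
      (fullChainGraph n k hn).entryColour p = fun v => if b < v then g v else none := by
    rcases (hbmin w ha hw).lt_or_eq with hbw | hbw
    · obtain ⟨p, hp, hpg⟩ := ih b hb.1 hbw
      exact ⟨p, Or.inr hp, hpg⟩
    · refine ⟨[], Or.inl ⟨rfl, hbw⟩, funext fun v => ?_⟩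
      split_ifs with hv
      · exact (hgt v (hbw ▸ hv)).symm
      · rfl
  have hdst : (fullChainGraph n k hn).dst e = b := rfl
  have hcol : some ((fullChainGraph n k hn).col e) = g b := Option.some_get _
  refine ⟨e :: p, (fullChainGraph n k hn).isPath_cons.mpr ⟨rfl, hp⟩, funext fun v => ?_⟩
  rw [WCEGraph.entryColour_cons, hpg, hdst, hcol]
  rcases eq_or_ne v b with rfl | hvb
  · simp [hb.1]
  rw [Function.update_of_ne hvb]
  rcases lt_or_gt_of_ne hvb with hvb | hvb
  · rw [if_neg hvb.asymm]
    split_ifs with hav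
    · exact (not_not.mp fun h => (hbmin v hav h).not_gt hvb).symm
    · rfl
  · simp [hvb, hb.1.trans hvb]

theorem image_entryColour_setOf_isPath {z w : Fin n} (hz : IsBot z) (hw : IsTop w) :
    (fullChainGraph n k hn).entryColour '' {p | (fullChainGraph n k hn).IsPath z w p} =
      {g | g z = none ∧ g w ≠ none} := by
  ext g
  constructor
  · rintro ⟨p, hp, rfl⟩
    exact ⟨hp.entryColour_start src_lt_dst, hp.entryColour_ne_none⟩
  · rintro ⟨h0, hlast⟩
    have hzw : z < w := (hz w).lt_of_ne fun h => hlast (h ▸ h0)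
    obtain ⟨p, hp, hpg⟩ := exists_isPath_entryColour_eq (hn := hn) g hlast
      (fun v hv => absurd (hw v) hv.not_ge) z hzw
    refine ⟨p, hp, hpg.trans (funext fun v => ?_)⟩
    split_ifs with hv
    · rfl
    · rw [← (hz v).antisymm (not_lt.mp hv), h0]

end fullChainGraph

/-- In the graph with `n ≥ 2` vertices and `k ≥ 1` colours having, for
each `i < j` and each colour, one edge from `v_i` to `v_j` of weight
`2 ^ (j - 1) - 2 ^ (i - 1)`, every path from `v₁` to `v_n` has total weight (summed over
all colours) `2 ^ (n - 1) - 1`, every path from `v₁` to `v_n` is minimal, and there are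
exactly `k * (k + 1) ^ (n - 2)` paths from `v₁` to `v_n`: the bound is attained. -/
theorem fullChainGraph_all_paths_minimal (n k : ℕ) (hn : 2 ≤ n) :
    (∀ p : List (fullChainGraph n k hn).E,
      (fullChainGraph n k hn).IsPath ⟨0, by omega⟩ ⟨n - 1, by omega⟩ p →
        (∑ c : Fin k, (fullChainGraph n k hn).colWeight c p) = 2 ^ (n - 1) - 1) ∧
    (∀ p : List (fullChainGraph n k hn).E,
      (fullChainGraph n k hn).IsPath ⟨0, by omega⟩ ⟨n - 1, by omega⟩ p →
        (fullChainGraph n k hn).IsMinimal ⟨0, by omega⟩ ⟨n - 1, by omega⟩ p) ∧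
    {p : List (fullChainGraph n k hn).E |
        (fullChainGraph n k hn).IsPath ⟨0, by omega⟩ ⟨n - 1, by omega⟩ p}.Finite ∧
    {p : List (fullChainGraph n k hn).E |
        (fullChainGraph n k hn).IsPath ⟨0, by omega⟩ ⟨n - 1, by omega⟩ p}.ncard
      = k * (k + 1) ^ (n - 2) := by
  set G := fullChainGraph n k hn
  set z : Fin n := ⟨0, by omega⟩
  set w : Fin n := ⟨n - 1, by omega⟩
  have hz : IsBot z := fun v => Fin.le_def.mpr v.val.zero_le
  have hw : IsTop w := fun v => Fin.le_def.mpr (Nat.le_sub_one_of_lt v.2)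
  have htotal : ∀ p, G.IsPath z w p → ∑ c, G.colWeight c p = 2 ^ (n - 1) - 1 := fun p hp => by
    rw [G.sum_colWeight, hp.sum_wt_eq_sub (φ := fun v : Fin n => (2 : ℝ) ^ (v : ℕ)) fun _ => rfl]
    simp [z, w]
  have hinj :=
    G.injOn_entryColour fullChainGraph.src_lt_dst (fun _ _ => fullChainGraph.edge_ext) z w
  have himage := fullChainGraph.image_entryColour_setOf_isPath (k := k) (hn := hn) hz hw
  refine ⟨htotal, fun p hp => hp.isMinimal_of_forall_sum_colWeight_eq htotal,
    Set.Finite.of_finite_image (himage ▸ Set.toFinite _) hinj, ?_⟩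
  have hzw : z ≠ w := Fin.ne_of_val_ne (show 0 ≠ n - 1 by omega)
  rw [← hinj.ncard_image, himage, ncard_setOf_eq_none_and_ne_none hzw]
  simp
end

section
/- In a canonical weighted coloured-edge graph G, for every pair of distinct vertices x and y and every colour c, the single-edge path consisting of the colour-c edge from x to y is a minimal path from x to y. -/
open Classical

namespace WCEGraph

/-- A weighted coloured-edge graph is canonical if it is complete in each colour
(for all distinct vertices `x ≠ y` and every colour `c` there is exactly one edge from
`x` to `y` of colour `c`) and satisfies the triangle inequality in each colour
(for all distinct vertices `x, y, z` and colour `c`, the colour-`c` edges `e : x → y`,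
`f : y → z`, `g : x → z` satisfy `ω(g) ≤ ω(e) + ω(f)`). -/
def Canonical {V M : Type} (G : WCEGraph V M) : Prop :=
  (∀ x y : V, x ≠ y → ∀ c : M,
      ∃! e : G.E, G.src e = x ∧ G.dst e = y ∧ G.col e = c) ∧
  (∀ e f g : G.E,
      G.src e ≠ G.dst e → G.src f ≠ G.dst f → G.src e ≠ G.dst f →
      G.dst e = G.src f → G.src g = G.src e → G.dst g = G.dst f →
      G.col e = G.col f → G.col e = G.col g →
      G.wt g ≤ G.wt e + G.wt f)

end WCEGraph

/-! Weights are positive, so a path `q ≤ [e]` carries no colour other than that of `e`.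
For a monochromatic path, induction on its length shows that its total weight dominates the
edge of that colour joining its endpoints: the tail dominates the edge from the second vertex
to the end, and the triangle inequality absorbs the first edge. -/

namespace WCEGraph

variable {V M : Type} {G : WCEGraph V M}

theorem colWeight_cons (c : M) (a : G.E) (p : List G.E) :
    G.colWeight c (a :: p) = (if G.col a = c then G.wt a else 0) + G.colWeight c p := by
  simp [colWeight]

theorem colWeight_singleton (c : M) (a : G.E) :
    G.colWeight c [a] = if G.col a = c then G.wt a else 0 := by
  simp [colWeight]

theorem colWeight_nonneg (c : M) (p : List G.E) : 0 ≤ G.colWeight c p := by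
  induction p with
  | nil => simp [colWeight]
  | cons a p ih =>
    rw [colWeight_cons]
    split_ifs
    · exact add_nonneg (G.wt_pos a).le ih
    · simpa using ih

theorem colWeight_col_pos_of_mem {a : G.E} {p : List G.E} (ha : a ∈ p) :
    0 < G.colWeight (G.col a) p := by
  induction p with
  | nil => simp at ha
  | cons b p ih =>
    rw [colWeight_cons]
    rcases List.mem_cons.mp ha with rfl | ha
    · simpa using add_pos_of_pos_of_nonneg (G.wt_pos a) (colWeight_nonneg _ p)
    · exact add_pos_of_nonneg_of_pos (by split_ifs <;> simp [(G.wt_pos b).le]) (ih ha)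

theorem colWeight_eq_sum_wt {c : M} {p : List G.E} (hp : ∀ a ∈ p, G.col a = c) :
    G.colWeight c p = (p.map G.wt).sum :=
  congrArg List.sum <| List.map_congr_left fun a ha => if_pos (hp a ha)

theorem col_eq_of_pathLE_singleton {q : List G.E} {e : G.E} (hle : G.pathLE q [e])
    {a : G.E} (ha : a ∈ q) : G.col a = G.col e := by
  by_contra hne
  have := hle (G.col a)
  rw [colWeight_singleton, if_neg (Ne.symm hne)] at this
  exact this.not_gt (colWeight_col_pos_of_mem ha)

theorem isPath_singleton {u v : V} {e : G.E} (hsrc : G.src e = u) (hdst : G.dst e = v) :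
    G.IsPath u v [e] :=
  ⟨List.cons_ne_nil _ _, by simpa using hsrc, by simpa using hdst, List.isChain_singleton _⟩

theorem IsPath.src_head {u v : V} {a : G.E} {p : List G.E} (hp : G.IsPath u v (a :: p)) :
    G.src a = u :=
  hp.2.1 a rfl

theorem IsPath.dst_of_singleton {u v : V} {a : G.E} (hp : G.IsPath u v [a]) : G.dst a = v :=
  hp.2.2.1 a rfl

theorem IsPath.tail {u v : V} {a : G.E} {p : List G.E} (hp : G.IsPath u v (a :: p))
    (hne : p ≠ []) : G.IsPath (G.dst a) v p := by
  obtain ⟨b, p, rfl⟩ := List.exists_cons_of_ne_nil hne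
  obtain ⟨-, -, hlast, hchain⟩ := hp
  refine ⟨hne, ?_, ?_, (List.isChain_cons_cons.mp hchain).2⟩
  · simpa using (List.isChain_cons_cons.mp hchain).1.symm
  · simpa [List.getLast?_cons_cons] using hlast

namespace Canonical

variable (hG : G.Canonical)
include hG

theorem edge_eq {e f : G.E} (hsrc : G.src e = G.src f) (hdst : G.dst e = G.dst f)
    (hcol : G.col e = G.col f) : e = f :=
  (hG.1 _ _ (G.no_loop f) _).unique ⟨hsrc, hdst, hcol⟩ ⟨rfl, rfl, rfl⟩

theorem exists_edge {x y : V} (hxy : x ≠ y) (c : M) :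
    ∃ e : G.E, G.src e = x ∧ G.dst e = y ∧ G.col e = c :=
  (hG.1 x y hxy c).exists

theorem wt_le_add {e f g : G.E} (hef : G.dst e = G.src f) (hg_src : G.src g = G.src e)
    (hg_dst : G.dst g = G.dst f) (hcol_ef : G.col e = G.col f) (hcol_eg : G.col e = G.col g) :
    G.wt g ≤ G.wt e + G.wt f :=
  hG.2 e f g (G.no_loop e) (G.no_loop f) (hg_src ▸ hg_dst ▸ G.no_loop g) hef hg_src hg_dst
    hcol_ef hcol_eg

theorem wt_le_sum_wt_of_isPath {u v : V} {g : G.E} (hg_src : G.src g = u)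
    (hg_dst : G.dst g = v) {q : List G.E} (hq : G.IsPath u v q)
    (hmono : ∀ a ∈ q, G.col a = G.col g) : G.wt g ≤ (q.map G.wt).sum := by
  induction q generalizing u g with
  | nil => exact absurd rfl hq.1
  | cons a p ih =>
    have hp_nonneg : 0 ≤ (p.map G.wt).sum :=
      List.sum_nonneg fun w hw => by
        obtain ⟨b, -, rfl⟩ := List.mem_map.mp hw
        exact (G.wt_pos b).le
    have ha_col := hmono a List.mem_cons_self
    rw [List.map_cons, List.sum_cons]
    by_cases ha_dst : G.dst a = v
    · have : g = a :=
        hG.edge_eq (by rw [hg_src, hq.src_head]) (by rw [hg_dst, ha_dst]) ha_col.symm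
      subst this
      linarith
    · have hp : p ≠ [] := by
        rintro rfl
        exact ha_dst hq.dst_of_singleton
      obtain ⟨g', hg'_src, hg'_dst, hg'_col⟩ := hG.exists_edge ha_dst (G.col g)
      have hg' : G.wt g' ≤ (p.map G.wt).sum :=
        ih hg'_src hg'_dst (hq.tail hp) fun b hb => (hmono b (List.mem_cons_of_mem a hb)).trans
          hg'_col.symm
      have htri : G.wt g ≤ G.wt a + G.wt g' :=
        hG.wt_le_add hg'_src.symm (by rw [hg_src, hq.src_head]) (by rw [hg_dst, hg'_dst])
          (ha_col.trans hg'_col.symm) ha_col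
      linarith

end Canonical

end WCEGraph

theorem canonical_edge_isMinimal_general {V M : Type} (G : WCEGraph V M)
    (hG : G.Canonical) (x y : V) (e : G.E)
    (hsrc : G.src e = x) (hdst : G.dst e = y) :
    G.IsMinimal x y [e] := by
  refine ⟨WCEGraph.isPath_singleton hsrc hdst, fun q hq hle d => ?_⟩
  have hmono : ∀ a ∈ q, G.col a = G.col e := fun a ha =>
    WCEGraph.col_eq_of_pathLE_singleton hle ha
  refine le_antisymm (hle d) ?_
  rw [WCEGraph.colWeight_singleton]
  split_ifs with hd
  · subst hd
    rw [WCEGraph.colWeight_eq_sum_wt hmono]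
    exact hG.wt_le_sum_wt_of_isPath hsrc hdst hq hmono
  · exact WCEGraph.colWeight_nonneg d q

/-- In a canonical weighted coloured-edge graph, for all distinct
vertices `x ≠ y` and every colour `c`, the single-edge path consisting of the
colour-`c` edge from `x` to `y` is a minimal path from `x` to `y`. -/
theorem canonical_edge_isMinimal {V M : Type} (G : WCEGraph V M)
    (hG : G.Canonical) (x y : V) (hxy : x ≠ y) (c : M) (e : G.E)
    (hsrc : G.src e = x) (hdst : G.dst e = y) (hcol : G.col e = c) :
    G.IsMinimal x y [e] :=
  canonical_edge_isMinimal_general G hG x y e hsrc hdst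
end

section
/- Let G be a finite weighted bicoloured-edge graph with colours {red, green}, and let u, v be vertices of G such that there exists a path from u to v using only green edges and a path from u to v using only red edges; let r_tot be the least red weight of a pure red path from u to v. Suppose the weights of all red edges e are independent random variables with probability density functions bounded above by constants φ_e. Then for every r with 0 ≤ r < r_tot and every ε > 0, ℙ(Δ(r) ≤ r + ε) ≤ (Σ_{red edges e} φ_e) · ε. -/
/-!
Fix the weights and suppose `r < r_tot` and `Δ(r) ≤ r + ε`. A minimal path `p` realising `Δ(r)`
and a path `q` of least green weight among those of red weight at most `r` satisfy
`ω_green(p) < ω_green(q)` by minimality of `p`. Since `ω_red(p) > r ≥ ω_red(q)` and `p` has no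
repeated edge, `p` has a red edge `e` avoided by `q`; then `r < Δ_e(r) ≤ r + ε`. Once the other
weights are fixed, the values of the weight of `e` for which `r < Δ_e(r) ≤ r + ε` form a set of
width at most `ε`: the paths counted by `Δ_e(r)` do not depend on that weight, and each of them
gains red weight at least as fast as `e` does. As the weight of `e` is independent of the others
and has density at most `φ_e`, this event has probability at most `φ_e ε`; sum over red `e`.
-/

open Classical MeasureTheory ProbabilityTheory

/-- The combinatorial data of a weighted bicoloured-edge graph: a directed multigraph
with vertex set `V` and edge type `E` (no self-loops), each edge being either red
(`red e = true`) or green (`red e = false`).  The (strictly positive) edge weights,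
which in this section may be random, are supplied separately as functions `w : E → ℝ`. -/
structure BiGraph (V : Type) where
  E : Type
  src : E → V
  dst : E → V
  red : E → Bool
  no_loop : ∀ e, src e ≠ dst e

namespace BiGraph

variable {V : Type} (G : BiGraph V)

/-- `p` is a path from `u` to `v`: a nonempty finite sequence of edges, each edge's
terminal vertex being the next edge's initial vertex, starting at `u` and ending at `v`. -/
def IsPath (u v : V) (p : List G.E) : Prop :=
  p ≠ [] ∧ (∀ e ∈ p.head?, G.src e = u) ∧ (∀ e ∈ p.getLast?, G.dst e = v) ∧
    p.Chain' (fun a b => G.dst a = G.src b)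

/-- `ω_red(p)`: the sum of the weights of the red edges of `p`, for weights `w`. -/
def redW (w : G.E → ℝ) (p : List G.E) : ℝ :=
  (p.map (fun e => if G.red e then w e else 0)).sum

/-- `ω_green(p)`: the sum of the weights of the green edges of `p`, for weights `w`. -/
def greenW (w : G.E → ℝ) (p : List G.E) : ℝ :=
  (p.map (fun e => if G.red e then 0 else w e)).sum

/-- `p` is a minimal path from `u` to `v` (w.r.t. weights `w`): every path `q` from `u`
to `v` with `ω_red(q) ≤ ω_red(p)` and `ω_green(q) ≤ ω_green(p)` has the same red and
green weights as `p`. -/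
def Minimal (w : G.E → ℝ) (u v : V) (p : List G.E) : Prop :=
  G.IsPath u v p ∧ ∀ q, G.IsPath u v q →
    G.redW w q ≤ G.redW w p → G.greenW w q ≤ G.greenW w p →
    G.redW w q = G.redW w p ∧ G.greenW w q = G.greenW w p

/-- `g_r`: the least green weight of a path from `u` to `v` that avoids the edge `e`
and has red weight at most `r`. -/
noncomputable def gVal (w : G.E → ℝ) (u v : V) (e : G.E) (r : ℝ) : ℝ :=
  sInf (G.greenW w '' {p | G.IsPath u v p ∧ e ∉ p ∧ G.redW w p ≤ r})

/-- The set of paths from `u` to `v` through the edge `e` whose green weight is less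
than `g_r`; the set over whose red weights `Δ_e(r)` is the infimum.  `Δ_e(r) = ∞`
corresponds to this set being empty. -/
def DeltaESet (w : G.E → ℝ) (u v : V) (e : G.E) (r : ℝ) : Set (List G.E) :=
  {q | G.IsPath u v q ∧ e ∈ q ∧ G.greenW w q < G.gVal w u v e r}

/-- `Δ_e(r)`: the least red weight of a path from `u` to `v` through `e` with green
weight less than `g_r`. -/
noncomputable def DeltaE (w : G.E → ℝ) (u v : V) (e : G.E) (r : ℝ) : ℝ :=
  sInf (G.redW w '' G.DeltaESet w u v e r)

/-- `r_tot`: the least red weight of a pure red path from `u` to `v`. -/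
noncomputable def rtot (w : G.E → ℝ) (u v : V) : ℝ :=
  sInf (G.redW w '' {p | G.IsPath u v p ∧ ∀ e ∈ p, G.red e = true})

/-- `Δ(r)`: the least red weight of a minimal path from `u` to `v` whose red weight
exceeds `r`. -/
noncomputable def Delta (w : G.E → ℝ) (u v : V) (r : ℝ) : ℝ :=
  sInf (G.redW w '' {q | G.Minimal w u v q ∧ r < G.redW w q})

end BiGraph

theorem List.exists_eq_append_cons_append_cons_of_not_nodup {α : Type*} {l : List α}
    (h : ¬l.Nodup) : ∃ (x : α) (s t c : List α), l = s ++ x :: (t ++ x :: c) := by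
  induction l with
  | nil => simp at h
  | cons a l ih =>
    by_cases ha : a ∈ l
    · obtain ⟨s, t, rfl⟩ := List.mem_iff_append.1 ha
      exact ⟨a, [], s, t, rfl⟩
    · obtain ⟨x, s, t, c, rfl⟩ := ih fun hl => h (List.nodup_cons.2 ⟨ha, hl⟩)
      exact ⟨x, a :: s, t, c, rfl⟩

theorem List.exists_forall_sum_map_le {E M : Type*} [Finite E] [AddCommMonoid M] [LinearOrder M]
    [IsOrderedCancelAddMonoid M] {f : E → M} (hf : ∀ e, 0 ≤ f e) {S : Set (List E)}
    (hS : S.Nonempty) : ∃ q ∈ S, ∀ q' ∈ S, (q.map f).sum ≤ (q'.map f).sum := by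
  have hsub : (fun q => (q.map f).sum) '' S ⊆ AddSubmonoid.closure (Set.range f) := by
    rintro _ ⟨q, -, rfl⟩
    refine AddSubmonoid.list_sum_mem _ fun x hx => ?_
    obtain ⟨e, -, rfl⟩ := List.mem_map.1 hx
    exact AddSubmonoid.subset_closure ⟨e, rfl⟩
  -- Higman's lemma: finitely many nonnegative generators span a partially well-ordered submonoid.
  have hwf : ((fun q => (q.map f).sum) '' S).IsWF :=
    ((Set.finite_range f).isPWO.addSubmonoid_closure (by rintro _ ⟨e, rfl⟩; exact hf e)
      |>.mono hsub).isWF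
  obtain ⟨q, hq, hmin⟩ := hwf.min_mem (hS.image _)
  exact ⟨q, hq, fun q' hq' => hmin.trans_le (hwf.min_le (hS.image _) ⟨q', hq', rfl⟩)⟩

theorem Set.subset_Icc_csInf_add {S : Set ℝ} (hS : S.Nonempty) {ε : ℝ}
    (h : ∀ x ∈ S, ∀ y ∈ S, y - x ≤ ε) : S ⊆ Set.Icc (sInf S) (sInf S + ε) := by
  obtain ⟨x₀, hx₀⟩ := hS
  have hbdd : BddBelow S := ⟨x₀ - ε, fun y hy => by linarith [h y hy x₀ hx₀]⟩
  intro x hx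
  have : x - ε ≤ sInf S := le_csInf ⟨x₀, hx₀⟩ fun y hy => by linarith [h y hy x hx]
  exact ⟨csInf_le hbdd hx, by linarith⟩

section Probability

variable {Ω : Type*} [MeasurableSpace Ω] {μ : Measure Ω}

theorem ProbabilityTheory.iIndepFun.indepFun_of_comap_le_iSup {ι : Type*} {β : ι → Type*}
    {mβ : ∀ i, MeasurableSpace (β i)} {X : ∀ i, Ω → β i} (hX : ∀ i, Measurable (X i))
    (h : iIndepFun X μ) {S T : Set ι} (hST : Disjoint S T) {γ δ : Type*}
    [mγ : MeasurableSpace γ] [mδ : MeasurableSpace δ] {Y : Ω → γ} {Z : Ω → δ}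
    (hY : mγ.comap Y ≤ ⨆ i ∈ S, (mβ i).comap (X i))
    (hZ : mδ.comap Z ≤ ⨆ i ∈ T, (mβ i).comap (X i)) : IndepFun Y Z μ := by
  rw [IndepFun_iff_Indep]
  exact indep_of_indep_of_le_right (indep_of_indep_of_le_left
    (indep_iSup_of_disjoint (fun i => (hX i).comap_le) h hST) hY) hZ

theorem ProbabilityTheory.IndepFun.measure_preimage_le_of_forall_section_le
    [IsProbabilityMeasure μ] {β γ : Type*} [MeasurableSpace β] [MeasurableSpace γ]
    {Y : Ω → β} {Z : Ω → γ} (hY : Measurable Y) (hZ : Measurable Z) (hYZ : IndepFun Y Z μ)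
    {C : Set (β × γ)} (hC : MeasurableSet C) {c : ENNReal}
    (hc : ∀ y, μ.map Z (Prod.mk y ⁻¹' C) ≤ c) :
    μ ((fun ω => (Y ω, Z ω)) ⁻¹' C) ≤ c := by
  have := Measure.isProbabilityMeasure_map (μ := μ) hY.aemeasurable
  have := Measure.isProbabilityMeasure_map (μ := μ) hZ.aemeasurable
  calc μ ((fun ω => (Y ω, Z ω)) ⁻¹' C) = (μ.map Y).prod (μ.map Z) C := by
        rw [← hYZ.map_prod_eq_prod_map_map hY.aemeasurable hZ.aemeasurable,
          Measure.map_apply (hY.prodMk hZ) hC]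
    _ = ∫⁻ y, μ.map Z (Prod.mk y ⁻¹' C) ∂μ.map Y := Measure.prod_apply hC
    _ ≤ ∫⁻ _, c ∂μ.map Y := lintegral_mono hc
    _ = c := by simp

variable {Z : Ω → ℝ} {f : ℝ → ℝ}

theorem measure_preimage_Icc_le_of_density_le
    (hZ : ∀ s, MeasurableSet s → μ (Z ⁻¹' s) = ENNReal.ofReal (∫ x in s, f x))
    {φ : ℝ} (hφ : 0 ≤ φ) (hf : ∀ x, f x ≤ φ) {a b : ℝ} (hab : a ≤ b) :
    μ (Z ⁻¹' Set.Icc a b) ≤ ENNReal.ofReal (φ * (b - a)) := by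
  rw [hZ _ measurableSet_Icc]
  refine ENNReal.ofReal_le_ofReal ?_
  by_cases hint : IntegrableOn f (Set.Icc a b)
  · calc ∫ x in Set.Icc a b, f x ≤ ∫ _ in Set.Icc a b, φ :=
          setIntegral_mono_on hint (integrableOn_const (by simp)) measurableSet_Icc
            fun x _ => hf x
      _ = φ * (b - a) := by simp [hab, mul_comm]
  · rw [integral_undef hint]
    exact mul_nonneg hφ (sub_nonneg.2 hab)

theorem map_le_ofReal_of_density_le (hZm : Measurable Z)
    (hZ : ∀ s, MeasurableSet s → μ (Z ⁻¹' s) = ENNReal.ofReal (∫ x in s, f x))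
    {φ : ℝ} (hφ : 0 ≤ φ) (hf : ∀ x, f x ≤ φ) {S : Set ℝ} {ε : ℝ}
    (hS : ∀ x ∈ S, ∀ y ∈ S, y - x ≤ ε) : μ.map Z S ≤ ENNReal.ofReal (φ * ε) := by
  rcases S.eq_empty_or_nonempty with rfl | ⟨x, hx⟩
  · simp
  have hε : 0 ≤ ε := by simpa using hS x hx x hx
  calc μ.map Z S ≤ μ.map Z (Set.Icc (sInf S) (sInf S + ε)) :=
        measure_mono (Set.subset_Icc_csInf_add ⟨x, hx⟩ hS)
    _ = μ (Z ⁻¹' Set.Icc (sInf S) (sInf S + ε)) := Measure.map_apply hZm measurableSet_Icc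
    _ ≤ ENNReal.ofReal (φ * ε) := by
      simpa using measure_preimage_Icc_le_of_density_le hZ hφ hf (le_add_of_nonneg_right hε)

theorem ae_pos_of_density_eq_zero
    (hZ : ∀ s, MeasurableSet s → μ (Z ⁻¹' s) = ENNReal.ofReal (∫ x in s, f x))
    (hf : ∀ x ≤ 0, f x = 0) : ∀ᵐ ω ∂μ, 0 < Z ω := by
  rw [ae_iff]
  simp only [not_lt]
  change μ (Z ⁻¹' Set.Iic 0) = 0
  rw [hZ _ measurableSet_Iic, setIntegral_congr_fun measurableSet_Iic hf]
  simp

end Probability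

namespace BiGraph

section Weights

variable {V : Type} {G : BiGraph V} {u v : V} {w : G.E → ℝ}

@[simp] lemma redW_nil : G.redW w [] = 0 := rfl

@[simp] lemma redW_cons (a : G.E) (p : List G.E) :
    G.redW w (a :: p) = (if G.red a then w a else 0) + G.redW w p := List.sum_cons

@[simp] lemma redW_append (p q : List G.E) : G.redW w (p ++ q) = G.redW w p + G.redW w q := by
  simp [redW]

@[simp] lemma greenW_cons (a : G.E) (p : List G.E) :
    G.greenW w (a :: p) = (if G.red a then 0 else w a) + G.greenW w p := List.sum_cons

@[simp] lemma greenW_append (p q : List G.E) :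
    G.greenW w (p ++ q) = G.greenW w p + G.greenW w q := by
  simp [greenW]

lemma redW_nonneg (hw : ∀ e, 0 ≤ w e) (p : List G.E) : 0 ≤ G.redW w p :=
  List.sum_nonneg <| List.forall_mem_map.2 fun e _ => ite_nonneg (hw e) le_rfl

lemma greenW_nonneg (hw : ∀ e, 0 ≤ w e) (p : List G.E) : 0 ≤ G.greenW w p :=
  List.sum_nonneg <| List.forall_mem_map.2 fun e _ => ite_nonneg le_rfl (hw e)

lemma redW_eq_zero_of_forall_green {p : List G.E} (hp : ∀ e ∈ p, G.red e = false) :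
    G.redW w p = 0 :=
  List.sum_eq_zero fun _ hx => by
    obtain ⟨e, he, rfl⟩ := List.mem_map.1 hx
    simp [hp e he]

lemma greenW_eq_zero_of_forall_red {p : List G.E} (hp : ∀ e ∈ p, G.red e = true) :
    G.greenW w p = 0 :=
  List.sum_eq_zero fun _ hx => by
    obtain ⟨e, he, rfl⟩ := List.mem_map.1 hx
    simp [hp e he]

lemma forall_red_of_greenW_nonpos (hw : ∀ e, 0 < w e) {p : List G.E}
    (hp : G.greenW w p ≤ 0) : ∀ e ∈ p, G.red e = true := by
  intro e he
  by_contra hred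
  have : w e ≤ G.greenW w p :=
    List.single_le_sum (List.forall_mem_map.2 fun e _ => ite_nonneg le_rfl (hw e).le) _
      (List.mem_map.2 ⟨e, he, by simp [hred]⟩)
  linarith [hw e]

lemma redW_filter_red (p : List G.E) : G.redW w (p.filter (G.red ·)) = G.redW w p := by
  induction p with
  | nil => rfl
  | cons a p ih => by_cases h : G.red a <;> simp [h, ih]

lemma redW_le_redW_of_nodup (hw : ∀ e, 0 ≤ w e) {p q : List G.E} (hp : p.Nodup)
    (hpq : ∀ e ∈ p, G.red e = true → e ∈ q) : G.redW w p ≤ G.redW w q := by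
  obtain ⟨l, hl, hlq⟩ := (hp.filter (G.red ·)).subperm fun e he => by
    rw [List.mem_filter] at he; exact hpq e he.1 he.2
  calc G.redW w p = G.redW w l := by rw [← redW_filter_red]; exact (hl.map _).sum_eq.symm
    _ ≤ G.redW w q :=
      (hlq.map _).sum_le_sum <| List.forall_mem_map.2 fun e _ => ite_nonneg (hw e) le_rfl

lemma exists_forall_redW_le [Finite G.E] (hw : ∀ e, 0 ≤ w e) {S : Set (List G.E)}
    (hS : S.Nonempty) : ∃ p ∈ S, ∀ q ∈ S, G.redW w p ≤ G.redW w q :=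
  List.exists_forall_sum_map_le (fun e => ite_nonneg (hw e) le_rfl) hS

lemma exists_forall_greenW_le [Finite G.E] (hw : ∀ e, 0 ≤ w e) {S : Set (List G.E)}
    (hS : S.Nonempty) : ∃ p ∈ S, ∀ q ∈ S, G.greenW w p ≤ G.greenW w q :=
  List.exists_forall_sum_map_le (fun e => ite_nonneg le_rfl (hw e)) hS

lemma IsPath.excise {s t c : List G.E} {x : G.E}
    (h : G.IsPath u v (s ++ x :: (t ++ x :: c))) : G.IsPath u v (s ++ x :: c) := by
  obtain ⟨-, hhead, hlast, hchain⟩ := h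
  refine ⟨by simp, by cases s <;> simpa using hhead, ?_, ?_⟩
  · rwa [List.getLast?_append_cons, ← List.cons_append, List.getLast?_append_cons,
      ← List.getLast?_append_cons s] at hlast
  · change List.IsChain _ _ at hchain ⊢
    simp only [List.isChain_append, List.isChain_cons] at hchain ⊢
    grind

lemma Minimal.nodup (hw : ∀ e, 0 < w e) {p : List G.E} (hp : G.Minimal w u v p) : p.Nodup := by
  by_contra hdup
  obtain ⟨x, s, t, c, rfl⟩ := List.exists_eq_append_cons_append_cons_of_not_nodup hdup
  have := redW_nonneg (fun e => (hw e).le) (G := G) t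
  have := greenW_nonneg (fun e => (hw e).le) (G := G) t
  have := hw x
  obtain ⟨hr, hg⟩ := hp.2 _ hp.1.excise
    (by simp only [redW_append, redW_cons]; split_ifs <;> linarith)
    (by simp only [greenW_append, greenW_cons]; split_ifs <;> linarith)
  simp only [redW_append, redW_cons, greenW_append, greenW_cons] at hr hg
  split_ifs at hr hg <;> linarith

lemma rtot_le_redW (hw : ∀ e, 0 ≤ w e) {p : List G.E} (hp : G.IsPath u v p)
    (hred : ∀ e ∈ p, G.red e = true) : G.rtot w u v ≤ G.redW w p :=
  csInf_le ⟨0, by rintro _ ⟨q, -, rfl⟩; exact redW_nonneg hw q⟩ ⟨p, ⟨hp, hred⟩, rfl⟩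

lemma exists_minimal_forall_red [Finite G.E] (hw : ∀ e, 0 < w e)
    (hred : ∃ p, G.IsPath u v p ∧ ∀ e ∈ p, G.red e = true) :
    ∃ p, G.Minimal w u v p ∧ ∀ e ∈ p, G.red e = true := by
  obtain ⟨p, ⟨hp, hpred⟩, hmin⟩ := exists_forall_redW_le (fun e => (hw e).le) hred
  refine ⟨p, ⟨hp, fun q hq hqr hqg => ?_⟩, hpred⟩
  rw [greenW_eq_zero_of_forall_red hpred] at hqg ⊢
  exact ⟨hqr.antisymm (hmin q ⟨hq, forall_red_of_greenW_nonpos hw hqg⟩),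
    hqg.antisymm (greenW_nonneg (fun e => (hw e).le) q)⟩

lemma exists_minimal_of_delta_le [Finite G.E] (hw : ∀ e, 0 < w e)
    (hred : ∃ p, G.IsPath u v p ∧ ∀ e ∈ p, G.red e = true) {r ε : ℝ}
    (hr : r < G.rtot w u v) (hΔ : G.Delta w u v r ≤ r + ε) :
    ∃ p, G.Minimal w u v p ∧ r < G.redW w p ∧ G.redW w p ≤ r + ε := by
  obtain ⟨p₀, hp₀, hp₀red⟩ := exists_minimal_forall_red hw hred
  obtain ⟨p, hp, hmin⟩ := exists_forall_redW_le (fun e => (hw e).le)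
    (S := {q | G.Minimal w u v q ∧ r < G.redW w q})
    ⟨p₀, hp₀, hr.trans_le (rtot_le_redW (fun e => (hw e).le) hp₀.1 hp₀red)⟩
  have hΔp : G.Delta w u v r = G.redW w p :=
    IsLeast.csInf_eq ⟨⟨p, hp, rfl⟩, by rintro _ ⟨q, hq, rfl⟩; exact hmin q hq⟩
  exact ⟨p, hp.1, hp.2, hΔp ▸ hΔ⟩

end Weights

section DeltaE

variable {V : Type} (G : BiGraph V)

/-- The paths through `e` over which `Δ_e(r)` is the infimum, with `ω_green(q) < g_r` unfolded so
that no junk value of `sInf ∅` enters when no `e`-avoiding path has red weight at most `r`. -/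
def DeltaEPath (w : G.E → ℝ) (u v : V) (e : G.E) (r : ℝ) (q : List G.E) : Prop :=
  G.IsPath u v q ∧ e ∈ q ∧ ∀ p, G.IsPath u v p → e ∉ p → G.redW w p ≤ r →
    G.greenW w q < G.greenW w p

/-- `r < Δ_e(r) ≤ r + ε`, read through `DeltaEPath`. -/
def DeltaEInIoc (w : G.E → ℝ) (u v : V) (e : G.E) (r ε : ℝ) : Prop :=
  (∃ q, G.DeltaEPath w u v e r q ∧ G.redW w q ≤ r + ε) ∧
    ∀ q, G.DeltaEPath w u v e r q → r < G.redW w q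

end DeltaE

section DeltaE

variable {V : Type} {G : BiGraph V} {u v : V} {w : G.E → ℝ} {e : G.E}

lemma exists_red_deltaEInIoc_of_minimal [Finite G.E] (hw : ∀ e, 0 < w e)
    (hgreen : ∃ p, G.IsPath u v p ∧ ∀ e ∈ p, G.red e = false) {r ε : ℝ} (hr : 0 ≤ r)
    {p : List G.E} (hp : G.Minimal w u v p) (hrp : r < G.redW w p)
    (hpε : G.redW w p ≤ r + ε) : ∃ e, G.red e = true ∧ G.DeltaEInIoc w u v e r ε := by
  have hw' : ∀ e, 0 ≤ w e := fun e => (hw e).le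
  obtain ⟨p₀, hp₀, hp₀green⟩ := hgreen
  obtain ⟨q, ⟨hq, hqr⟩, hqmin⟩ := exists_forall_greenW_le hw'
    (S := {q | G.IsPath u v q ∧ G.redW w q ≤ r})
    ⟨p₀, hp₀, (redW_eq_zero_of_forall_green hp₀green).trans_le hr⟩
  have hpq : G.greenW w p < G.greenW w q :=
    lt_of_not_ge fun h => by linarith [(hp.2 q hq (hqr.trans hrp.le) h).1]
  obtain ⟨e, hep, hered, heq⟩ : ∃ e ∈ p, G.red e = true ∧ e ∉ q := by
    by_contra! h
    linarith [redW_le_redW_of_nodup hw' (hp.nodup hw) h]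
  refine ⟨e, hered, ⟨p, ⟨hp.1, hep, fun p' hp' _ hp'r => ?_⟩, hpε⟩, fun q' hq' => ?_⟩
  · exact hpq.trans_le (hqmin p' ⟨hp', hp'r⟩)
  · by_contra! hq'r
    linarith [hq'.2.2 q hq heq hqr, hqmin q' ⟨hq'.1, hq'r⟩]

lemma redW_update (he : G.red e = true) (x : ℝ) (q : List G.E) :
    G.redW (Function.update w e x) q = G.redW w q + q.count e * (x - w e) := by
  induction q with
  | nil => simp
  | cons a q ih =>
    by_cases hae : a = e
    · subst hae
      simp only [redW_cons, he, if_true, Function.update_self, ih, List.count_cons_self]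
      push_cast
      ring
    · simp only [redW_cons, Function.update_of_ne hae, ih, List.count_cons, beq_false_of_ne hae,
        Bool.false_eq_true, if_false, add_zero]
      ring

lemma greenW_update (he : G.red e = true) (x : ℝ) (q : List G.E) :
    G.greenW (Function.update w e x) q = G.greenW w q := by
  refine congrArg List.sum (List.map_congr_left fun a _ => ?_)
  by_cases hae : a = e
  · subst hae; simp [he]
  · simp [Function.update_of_ne hae]

lemma deltaEPath_update_iff (he : G.red e = true) {x r : ℝ} {q : List G.E} :
    G.DeltaEPath (Function.update w e x) u v e r q ↔ G.DeltaEPath w u v e r q := by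
  have hred : ∀ p, e ∉ p → G.redW (Function.update w e x) p = G.redW w p := fun p hp => by
    simp [redW_update he, List.count_eq_zero_of_not_mem hp]
  simp only [DeltaEPath, greenW_update he]
  grind

lemma DeltaEInIoc.sub_le (he : G.red e = true) {x₁ x₂ r ε : ℝ}
    (h₁ : G.DeltaEInIoc (Function.update w e x₁) u v e r ε)
    (h₂ : G.DeltaEInIoc (Function.update w e x₂) u v e r ε) : x₂ - x₁ ≤ ε := by
  obtain ⟨⟨q, hq, hqε⟩, -⟩ := h₂
  have hrq := h₁.2 q ((deltaEPath_update_iff he).2 ((deltaEPath_update_iff he).1 hq))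
  obtain ⟨⟨q₁, hq₁, hq₁ε⟩, hq₁r⟩ := h₁
  have hε := (hq₁r q₁ hq₁).trans_le hq₁ε
  -- `q` passes through `e`, so its red weight grows at least as fast as the weight of `e`
  have hcount : 1 ≤ (q.count e : ℝ) := by exact_mod_cast List.count_pos_iff.2 hq.2.1
  rw [redW_update he] at hrq hqε
  nlinarith

@[fun_prop]
lemma measurable_redW (q : List G.E) : Measurable fun w : G.E → ℝ => G.redW w q := by
  induction q with
  | nil => exact measurable_const
  | cons a q ih =>
    simp only [redW_cons]
    by_cases h : G.red a <;> simp only [h, if_true, if_false, Bool.false_eq_true] <;> fun_prop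

@[fun_prop]
lemma measurable_greenW (q : List G.E) : Measurable fun w : G.E → ℝ => G.greenW w q := by
  induction q with
  | nil => exact measurable_const
  | cons a q ih =>
    simp only [greenW_cons]
    by_cases h : G.red a <;> simp only [h, if_true, if_false, Bool.false_eq_true] <;> fun_prop

lemma measurableSet_deltaEInIoc [Countable G.E] (r ε : ℝ) :
    MeasurableSet {w | G.DeltaEInIoc w u v e r ε} :=
  measurableSet_setOfPred.2 <| by unfold DeltaEInIoc DeltaEPath; fun_prop

lemma comap_update_le_iSup {Ω : Type*} (X : G.E → Ω → ℝ) (w₀ : G.E → ℝ) (e : G.E) :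
    MeasurableSpace.comap
        (fun ω => Function.update (fun e => if G.red e then X e ω else w₀ e) e 0)
        MeasurableSpace.pi ≤
      ⨆ i ∈ {i : {e : G.E // G.red e = true} | i.1 ≠ e},
        MeasurableSpace.comap (X i.1) Real.measurableSpace := by
  refine (MeasurableSpace.comap_process_pi _).trans_le (iSup_le fun e' => ?_)
  by_cases hee' : e' = e
  · simp [hee', MeasurableSpace.comap_const]
  by_cases he' : G.red e'
  · simp only [Function.update_of_ne hee', he', if_true]
    exact le_iSup₂_of_le (⟨e', he'⟩ : {e : G.E // G.red e = true}) hee' le_rfl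
  · simp [Function.update_of_ne hee', he', MeasurableSpace.comap_const]

lemma measure_deltaEInIoc_le [Countable G.E] {Ω : Type*} [MeasurableSpace Ω] {μ : Measure Ω}
    [IsProbabilityMeasure μ] {X : G.E → Ω → ℝ} (hX : ∀ e, Measurable (X e))
    (hindep : iIndepFun (fun e : {e : G.E // G.red e = true} => X e.1) μ) (w₀ : G.E → ℝ)
    (he : G.red e = true) {f : ℝ → ℝ} {φ : ℝ} (hφ : 0 ≤ φ) (hf : ∀ x, f x ≤ φ)
    (hpdf : ∀ s, MeasurableSet s → μ (X e ⁻¹' s) = ENNReal.ofReal (∫ x in s, f x))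
    (r ε : ℝ) :
    μ {ω | G.DeltaEInIoc (fun e => if G.red e then X e ω else w₀ e) u v e r ε} ≤
      ENNReal.ofReal (φ * ε) := by
  set W : Ω → G.E → ℝ := fun ω e => if G.red e then X e ω else w₀ e
  set Y : Ω → G.E → ℝ := fun ω => Function.update (W ω) e 0
  have hWY : ∀ ω, W ω = Function.update (Y ω) e (X e ω) := fun ω => by simp [Y, W, he]
  have hYm := comap_update_le_iSup X w₀ e
  have hST : Disjoint {i : {e : G.E // G.red e = true} | i.1 ≠ e} {i | i.1 = e} :=
    Set.disjoint_left.2 fun _ h₁ h₂ => h₁ h₂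
  have hYX : IndepFun Y (X e) μ := by
    refine hindep.indepFun_of_comap_le_iSup (fun i => hX i.1) hST ?_ ?_
    · exact hYm
    · exact le_iSup₂_of_le (⟨e, he⟩ : {e : G.E // G.red e = true}) rfl le_rfl
  have hC : MeasurableSet {z : (G.E → ℝ) × ℝ |
      G.DeltaEInIoc (Function.update z.1 e z.2) u v e r ε} :=
    (measurableSet_deltaEInIoc r ε).preimage measurable_update'
  calc μ {ω | G.DeltaEInIoc (W ω) u v e r ε}
      = μ ((fun ω => (Y ω, X e ω)) ⁻¹'
          {z | G.DeltaEInIoc (Function.update z.1 e z.2) u v e r ε}) := by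
        simp only [hWY]; rfl
    _ ≤ ENNReal.ofReal (φ * ε) :=
      hYX.measure_preimage_le_of_forall_section_le
        (measurable_iff_comap_le.2 (hYm.trans (iSup₂_le fun i _ => (hX i.1).comap_le))) (hX e)
        hC fun y => map_le_ofReal_of_density_le (hX e) hpdf hφ hf fun _ h₁ _ h₂ =>
          h₁.sub_le he h₂

end DeltaE

end BiGraph

theorem prob_Delta_le_le_general {V : Type} (G : BiGraph V) [Fintype G.E]
    (u v : V)
    (hgreen : ∃ p : List G.E, G.IsPath u v p ∧ ∀ e ∈ p, G.red e = false)
    (hred : ∃ p : List G.E, G.IsPath u v p ∧ ∀ e ∈ p, G.red e = true)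
    (w₀ : G.E → ℝ) (hw₀ : ∀ e : G.E, G.red e = false → 0 < w₀ e)
    {Ω : Type} [MeasurableSpace Ω] (μ : MeasureTheory.Measure Ω) [IsProbabilityMeasure μ]
    (X : G.E → Ω → ℝ) (hX : ∀ e, Measurable (X e))
    (hindep : ProbabilityTheory.iIndepFun
      (fun e : {e : G.E // G.red e = true} => X e.1) μ)
    (φ : G.E → ℝ) (f : G.E → ℝ → ℝ)
    (hφ : ∀ e : G.E, G.red e = true → 0 < φ e)
    (hf_le : ∀ e : G.E, G.red e = true → ∀ x, f e x ≤ φ e)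
    (hf_supp : ∀ e : G.E, G.red e = true → ∀ x ≤ 0, f e x = 0)
    (hf_pdf : ∀ e : G.E, G.red e = true → ∀ s : Set ℝ, MeasurableSet s →
      μ (X e ⁻¹' s) = ENNReal.ofReal (∫ x in s, f e x))
    (r ε : ℝ) (hr : 0 ≤ r) (hε : 0 < ε) :
    μ {ω : Ω | r < G.rtot (fun e => if G.red e then X e ω else w₀ e) u v ∧
        G.Delta (fun e => if G.red e then X e ω else w₀ e) u v r ≤ r + ε} ≤
      ENNReal.ofReal ((∑ e ∈ Finset.univ.filter (fun e : G.E => G.red e = true), φ e) * ε) := by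
  set W : Ω → G.E → ℝ := fun ω e => if G.red e then X e ω else w₀ e
  set R := Finset.univ.filter (fun e : G.E => G.red e = true)
  have hR : ∀ e ∈ R, G.red e = true := fun e he => (Finset.mem_filter.1 he).2
  have hW : ∀ᵐ ω ∂μ, ∀ e, 0 < W ω e := by
    refine ae_all_iff.2 fun e => ?_
    by_cases he : G.red e
    · filter_upwards [ae_pos_of_density_eq_zero (hf_pdf e he) (hf_supp e he)] with ω hω
      simpa [W, he] using hω
    · exact ae_of_all _ fun ω => by simpa [W, he] using hw₀ e (by simpa using he)
  have hcover : {ω | r < G.rtot (W ω) u v ∧ G.Delta (W ω) u v r ≤ r + ε} ≤ᵐ[μ]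
      ⋃ e ∈ R, {ω | G.DeltaEInIoc (W ω) u v e r ε} := by
    filter_upwards [hW] with ω hω ⟨hrtot, hΔ⟩
    obtain ⟨p, hp, hrp, hpε⟩ := BiGraph.exists_minimal_of_delta_le hω hred hrtot hΔ
    obtain ⟨e, he, hΔe⟩ := BiGraph.exists_red_deltaEInIoc_of_minimal hω hgreen hr hp hrp hpε
    exact Set.mem_biUnion (by simpa [R] using he) hΔe
  calc μ {ω | r < G.rtot (W ω) u v ∧ G.Delta (W ω) u v r ≤ r + ε}
      ≤ μ (⋃ e ∈ R, {ω | G.DeltaEInIoc (W ω) u v e r ε}) := measure_mono_ae hcover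
    _ ≤ ∑ e ∈ R, μ {ω | G.DeltaEInIoc (W ω) u v e r ε} := measure_biUnion_finset_le _ _
    _ ≤ ∑ e ∈ R, ENNReal.ofReal (φ e * ε) := Finset.sum_le_sum fun e he =>
      BiGraph.measure_deltaEInIoc_le hX hindep w₀ (hR e he) (hφ e (hR e he)).le
        (hf_le e (hR e he)) (hf_pdf e (hR e he)) r ε
    _ = ENNReal.ofReal ((∑ e ∈ R, φ e) * ε) := by
      rw [Finset.sum_mul, ENNReal.ofReal_sum_of_nonneg fun e he =>
        mul_nonneg (hφ e (hR e he)).le hε.le]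

/-- **Corollary 5.** Let `G` be a finite weighted bicoloured-edge graph
with `u`, `v` joined both by a pure green path and by a pure red path, where the green
edge weights are fixed (given by `w₀`) and the weights `X e` of the red edges `e` are
independent random variables with probability densities `f e` supported on `(0,∞)` and
bounded by `φ e`.  Then for every `r` with `0 ≤ r < r_tot` and every `ε > 0`,
`ℙ(Δ(r) ≤ r + ε) ≤ (Σ_{red e} φ e) · ε`. -/
theorem prob_Delta_le_le {V : Type} [Fintype V] (G : BiGraph V) [Fintype G.E]
    (u v : V)
    (hgreen : ∃ p : List G.E, G.IsPath u v p ∧ ∀ e ∈ p, G.red e = false)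
    (hred : ∃ p : List G.E, G.IsPath u v p ∧ ∀ e ∈ p, G.red e = true)
    (w₀ : G.E → ℝ) (hw₀ : ∀ e : G.E, G.red e = false → 0 < w₀ e)
    {Ω : Type} [MeasurableSpace Ω] (μ : MeasureTheory.Measure Ω) [IsProbabilityMeasure μ]
    (X : G.E → Ω → ℝ) (hX : ∀ e, Measurable (X e))
    (hindep : ProbabilityTheory.iIndepFun
      (fun e : {e : G.E // G.red e = true} => X e.1) μ)
    (φ : G.E → ℝ) (f : G.E → ℝ → ℝ)
    (hφ : ∀ e : G.E, G.red e = true → 0 < φ e)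
    (hf_nonneg : ∀ e : G.E, G.red e = true → ∀ x, 0 ≤ f e x)
    (hf_le : ∀ e : G.E, G.red e = true → ∀ x, f e x ≤ φ e)
    (hf_supp : ∀ e : G.E, G.red e = true → ∀ x ≤ 0, f e x = 0)
    (hf_pdf : ∀ e : G.E, G.red e = true → ∀ s : Set ℝ, MeasurableSet s →
      μ (X e ⁻¹' s) = ENNReal.ofReal (∫ x in s, f e x))
    (r ε : ℝ) (hr : 0 ≤ r) (hε : 0 < ε) :
    μ {ω : Ω | r < G.rtot (fun e => if G.red e then X e ω else w₀ e) u v ∧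
        G.Delta (fun e => if G.red e then X e ω else w₀ e) u v r ≤ r + ε} ≤
      ENNReal.ofReal ((∑ e ∈ Finset.univ.filter (fun e : G.E => G.red e = true), φ e) * ε) :=
  prob_Delta_le_le_general G u v hgreen hred w₀ hw₀ μ X hX hindep φ f hφ hf_le hf_supp hf_pdf r ε hr
    hε
end
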